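/- arXiv:2512.16772 — 3 statements merged into one kernel-verified Lean document; each statement's English description precedes it below -/
import Mathlib

section
/- On the open set {𝔭 ∈ ℝ⁵ : 𝔭₅ ≠ 0}, the three functions 𝔥₁(𝔭) = (1/3)(𝔭₁² − 𝔭₁𝔭₂ + 𝔭₂² + 3(𝔭₃² + 𝔭₄² + 𝔭₅²)), 𝔥₂(𝔭) = (1/27)(−2𝔭₁³ + 3𝔭₂𝔭₁² + 3(𝔭₂² − 3(𝔭₃² − 2𝔭₄² + 𝔭₅²))𝔭₁ − 2𝔭₂³ − 54𝔭₃𝔭₄𝔭₅ − 9𝔭₂(𝔭₃² + 𝔭₄² − 2𝔭₅²)), and 𝔥₃(𝔭) = (1/3)(𝔭₁ − 2𝔭₂ + 3𝔭₃𝔭₄/𝔭₅) are pairwise in involution with respect to the reduced Poisson bracket of the Borel subalgebra of sl(3, ℝ): {𝔥ᵢ, 𝔥ⱼ}_red = 0 for all i, j ∈ {1, 2, 3}. -/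
open scoped BigOperators

/-- Partial derivative `∂F/∂𝔭_a` of a function on `ℝ⁵` (momenta `𝔭₁,…,𝔭₅ = p 0,…,p 4`). -/
noncomputable def pd5 (F : EuclideanSpace ℝ (Fin 5) → ℝ) (a : Fin 5)
    (p : EuclideanSpace ℝ (Fin 5)) : ℝ :=
  fderiv ℝ F p (EuclideanSpace.single a 1)

/-- The reduced Poisson bracket of the Borel subalgebra of `sl(3,ℝ)` acting on smooth
functions of the momenta `(𝔭₁,…,𝔭₅)`. -/
noncomputable def redPB (F G : EuclideanSpace ℝ (Fin 5) → ℝ)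
    (p : EuclideanSpace ℝ (Fin 5)) : ℝ :=
  -2 * p 2 * (-(pd5 F 2 p) * pd5 G 0 p + pd5 F 2 p * pd5 G 1 p
      + pd5 F 0 p * pd5 G 2 p - pd5 F 1 p * pd5 G 2 p)
  - 2 * p 3 * (-(pd5 F 3 p) * pd5 G 0 p - 2 * pd5 F 3 p * pd5 G 1 p
      + pd5 F 0 p * pd5 G 3 p + 2 * pd5 F 1 p * pd5 G 3 p)
  - 2 * p 4 * (-2 * pd5 F 4 p * pd5 G 0 p - pd5 F 4 p * pd5 G 1 p
      - pd5 F 3 p * pd5 G 2 p + pd5 F 2 p * pd5 G 3 p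
      + 2 * pd5 F 0 p * pd5 G 4 p + pd5 F 1 p * pd5 G 4 p)

/-- First Arkhangel'skii Hamiltonian (quadratic geodesic Hamiltonian). -/
noncomputable def ham1 (p : EuclideanSpace ℝ (Fin 5)) : ℝ :=
  (1/3) * ((p 0)^2 - p 0 * p 1 + (p 1)^2 + 3 * ((p 2)^2 + (p 3)^2 + (p 4)^2))

/-- Second Arkhangel'skii Hamiltonian (cubic). -/
noncomputable def ham2 (p : EuclideanSpace ℝ (Fin 5)) : ℝ :=
  (1/27) * (-2*(p 0)^3 + 3*(p 1)*(p 0)^2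
    + 3*((p 1)^2 - 3*((p 2)^2 - 2*(p 3)^2 + (p 4)^2)) * p 0
    - 2*(p 1)^3 - 54 * p 2 * p 3 * p 4 - 9 * p 1 * ((p 2)^2 + (p 3)^2 - 2*(p 4)^2))

/-- Third Arkhangel'skii Hamiltonian (Casimir, defined for `𝔭₅ ≠ 0`). -/
noncomputable def ham3 (p : EuclideanSpace ℝ (Fin 5)) : ℝ :=
  (1/3) * (p 0 - 2 * p 1 + 3 * p 2 * p 3 / p 4)

noncomputable def arkHam : Fin 3 → EuclideanSpace ℝ (Fin 5) → ℝ := ![ham1, ham2, ham3]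

set_option maxHeartbeats 4000000

noncomputable def prj (i : Fin 5) : EuclideanSpace ℝ (Fin 5) →L[ℝ] ℝ := EuclideanSpace.proj i

lemma hprj (i : Fin 5) (p : EuclideanSpace ℝ (Fin 5)) :
    HasFDerivAt (fun q : EuclideanSpace ℝ (Fin 5) => q i) (prj i) p := by
  have h := (EuclideanSpace.proj (𝕜 := ℝ) i).hasFDerivAt (x := p)
  exact h.congr_of_eventuallyEq (by filter_upwards with q; simp)

noncomputable def e (a i : Fin 5) : ℝ := if a = i then 1 else 0

lemma pd5_ham1 (p : EuclideanSpace ℝ (Fin 5)) (a : Fin 5) :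
    pd5 ham1 a p = (1/3) * ((2*p 0 - p 1) * e a 0 + (2*p 1 - p 0) * e a 1
      + 6*p 2 * e a 2 + 6*p 3 * e a 3 + 6*p 4 * e a 4) := by
  have h0 := hprj 0 p; have h1 := hprj 1 p; have h2 := hprj 2 p
  have h3 := hprj 3 p; have h4 := hprj 4 p
  have H := ((((h0.mul h0).sub (h0.mul h1)).add (h1.mul h1)).add
      ((((h2.mul h2).add (h3.mul h3)).add (h4.mul h4)).const_mul (3:ℝ))).const_mul (1/3:ℝ)
  have hH := H.congr_of_eventuallyEq (f₁ := ham1)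
      (by filter_upwards with q; simp [ham1]; ring)
  rw [pd5, hH.fderiv]
  fin_cases a <;>
    simp (config := { decide := true }) [prj, EuclideanSpace.single_apply, e] <;>
    ring

lemma pd5_ham2 (p : EuclideanSpace ℝ (Fin 5)) (a : Fin 5) :
    pd5 ham2 a p = (1/27) *
      ((-6*(p 0)^2 + 6*p 0*p 1 + 3*(p 1)^2 - 9*(p 2)^2 + 18*(p 3)^2 - 9*(p 4)^2) * e a 0
      + (3*(p 0)^2 + 6*p 0*p 1 - 6*(p 1)^2 - 9*(p 2)^2 - 9*(p 3)^2 + 18*(p 4)^2) * e a 1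
      + (-18*p 0*p 2 - 18*p 1*p 2 - 54*p 3*p 4) * e a 2
      + (36*p 0*p 3 - 18*p 1*p 3 - 54*p 2*p 4) * e a 3
      + (-18*p 0*p 4 + 36*p 1*p 4 - 54*p 2*p 3) * e a 4) := by
  have h0 := hprj 0 p; have h1 := hprj 1 p; have h2 := hprj 2 p
  have h3 := hprj 3 p; have h4 := hprj 4 p
  have m1 := ((h0.mul h0).mul h0).const_mul (-2:ℝ)
  have m2 := (h1.mul (h0.mul h0)).const_mul (3:ℝ)
  have m3 := ((h1.mul h1).mul h0).const_mul (3:ℝ)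
  have m4 := ((h2.mul h2).mul h0).const_mul (-9:ℝ)
  have m5 := ((h3.mul h3).mul h0).const_mul (18:ℝ)
  have m6 := ((h4.mul h4).mul h0).const_mul (-9:ℝ)
  have m7 := ((h1.mul h1).mul h1).const_mul (-2:ℝ)
  have m8 := ((h2.mul h3).mul h4).const_mul (-54:ℝ)
  have m9 := (h1.mul (h2.mul h2)).const_mul (-9:ℝ)
  have m10 := (h1.mul (h3.mul h3)).const_mul (-9:ℝ)
  have m11 := (h1.mul (h4.mul h4)).const_mul (18:ℝ)
  have H := ((((((((((m1.add m2).add m3).add m4).add m5).add m6).add m7).add m8).add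
      m9).add m10).add m11).const_mul (1/27:ℝ)
  have hH := H.congr_of_eventuallyEq (f₁ := ham2)
      (by filter_upwards with q; simp [ham2]; ring)
  rw [pd5, hH.fderiv]
  fin_cases a <;>
    simp (config := { decide := true }) [prj, EuclideanSpace.single_apply, e] <;>
    ring

lemma pd5_ham3 (p : EuclideanSpace ℝ (Fin 5)) (hp : p 4 ≠ 0) (a : Fin 5) :
    pd5 ham3 a p = (1/3) * e a 0 - (2/3) * e a 1 + (p 3 / p 4) * e a 2
      + (p 2 / p 4) * e a 3 - (p 2 * p 3 / (p 4)^2) * e a 4 := by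
  have h0 := hprj 0 p; have h1 := hprj 1 p; have h2 := hprj 2 p
  have h3 := hprj 3 p; have h4 := hprj 4 p
  have hinv := (hasDerivAt_inv hp).comp_hasFDerivAt p h4
  have hdiv := ((h2.mul h3).const_mul (3:ℝ)).mul hinv
  have H := ((h0.sub (h1.const_mul (2:ℝ))).add hdiv).const_mul (1/3:ℝ)
  have hH := H.congr_of_eventuallyEq (f₁ := ham3)
      (by filter_upwards with q; simp [ham3, Function.comp]; ring)
  rw [pd5, hH.fderiv]
  fin_cases a <;>
    simp (config := { decide := true }) [prj, EuclideanSpace.single_apply, e] <;>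
    field_simp <;> ring

lemma pd5_ham1_0 (p : EuclideanSpace ℝ (Fin 5)) :
    pd5 ham1 0 p = (1/3) * (2*p 0 - p 1) := by
  rw [pd5_ham1]; simp (config := { decide := true }) [e] <;> ring

lemma pd5_ham2_0 (p : EuclideanSpace ℝ (Fin 5)) :
    pd5 ham2 0 p = (1/27) * (-6*(p 0)^2 + 6*p 0*p 1 + 3*(p 1)^2 - 9*(p 2)^2 + 18*(p 3)^2 - 9*(p 4)^2) := by
  rw [pd5_ham2]; simp (config := { decide := true }) [e] <;> ring

lemma pd5_ham3_0 (p : EuclideanSpace ℝ (Fin 5)) (hp : p 4 ≠ 0) :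
    pd5 ham3 0 p = (1/3 : ℝ) := by
  rw [pd5_ham3 p hp]; simp (config := { decide := true }) [e] <;> ring

lemma pd5_ham1_1 (p : EuclideanSpace ℝ (Fin 5)) :
    pd5 ham1 1 p = (1/3) * (2*p 1 - p 0) := by
  rw [pd5_ham1]; simp (config := { decide := true }) [e] <;> ring

lemma pd5_ham2_1 (p : EuclideanSpace ℝ (Fin 5)) :
    pd5 ham2 1 p = (1/27) * (3*(p 0)^2 + 6*p 0*p 1 - 6*(p 1)^2 - 9*(p 2)^2 - 9*(p 3)^2 + 18*(p 4)^2) := by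
  rw [pd5_ham2]; simp (config := { decide := true }) [e] <;> ring

lemma pd5_ham3_1 (p : EuclideanSpace ℝ (Fin 5)) (hp : p 4 ≠ 0) :
    pd5 ham3 1 p = (-2/3 : ℝ) := by
  rw [pd5_ham3 p hp]; simp (config := { decide := true }) [e] <;> ring

lemma pd5_ham1_2 (p : EuclideanSpace ℝ (Fin 5)) :
    pd5 ham1 2 p = 2*p 2 := by
  rw [pd5_ham1]; simp (config := { decide := true }) [e] <;> ring

lemma pd5_ham2_2 (p : EuclideanSpace ℝ (Fin 5)) :
    pd5 ham2 2 p = (1/27) * (-18*p 0*p 2 - 18*p 1*p 2 - 54*p 3*p 4) := by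
  rw [pd5_ham2]; simp (config := { decide := true }) [e] <;> ring

lemma pd5_ham3_2 (p : EuclideanSpace ℝ (Fin 5)) (hp : p 4 ≠ 0) :
    pd5 ham3 2 p = p 3 / p 4 := by
  rw [pd5_ham3 p hp]; simp (config := { decide := true }) [e] <;> ring

lemma pd5_ham1_3 (p : EuclideanSpace ℝ (Fin 5)) :
    pd5 ham1 3 p = 2*p 3 := by
  rw [pd5_ham1]; simp (config := { decide := true }) [e] <;> ring

lemma pd5_ham2_3 (p : EuclideanSpace ℝ (Fin 5)) :
    pd5 ham2 3 p = (1/27) * (36*p 0*p 3 - 18*p 1*p 3 - 54*p 2*p 4) := by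
  rw [pd5_ham2]; simp (config := { decide := true }) [e] <;> ring

lemma pd5_ham3_3 (p : EuclideanSpace ℝ (Fin 5)) (hp : p 4 ≠ 0) :
    pd5 ham3 3 p = p 2 / p 4 := by
  rw [pd5_ham3 p hp]; simp (config := { decide := true }) [e] <;> ring

lemma pd5_ham1_4 (p : EuclideanSpace ℝ (Fin 5)) :
    pd5 ham1 4 p = 2*p 4 := by
  rw [pd5_ham1]; simp (config := { decide := true }) [e] <;> ring

lemma pd5_ham2_4 (p : EuclideanSpace ℝ (Fin 5)) :
    pd5 ham2 4 p = (1/27) * (-18*p 0*p 4 + 36*p 1*p 4 - 54*p 2*p 3) := by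
  rw [pd5_ham2]; simp (config := { decide := true }) [e] <;> ring

lemma pd5_ham3_4 (p : EuclideanSpace ℝ (Fin 5)) (hp : p 4 ≠ 0) :
    pd5 ham3 4 p = -(p 2 * p 3 / (p 4)^2) := by
  rw [pd5_ham3 p hp]; simp (config := { decide := true }) [e] <;> ring

lemma brk11 (p : EuclideanSpace ℝ (Fin 5)) (hp : p 4 ≠ 0) :
    redPB ham1 ham1 p = 0 := by
  rw [redPB, pd5_ham1_0 p, pd5_ham1_1 p, pd5_ham1_2 p, pd5_ham1_3 p, pd5_ham1_4 p]
  field_simp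
  ring

lemma brk12 (p : EuclideanSpace ℝ (Fin 5)) (hp : p 4 ≠ 0) :
    redPB ham1 ham2 p = 0 := by
  rw [redPB, pd5_ham1_0 p, pd5_ham1_1 p, pd5_ham1_2 p, pd5_ham1_3 p, pd5_ham1_4 p, pd5_ham2_0 p, pd5_ham2_1 p, pd5_ham2_2 p, pd5_ham2_3 p, pd5_ham2_4 p]
  field_simp
  ring

lemma brk13 (p : EuclideanSpace ℝ (Fin 5)) (hp : p 4 ≠ 0) :
    redPB ham1 ham3 p = 0 := by
  rw [redPB, pd5_ham1_0 p, pd5_ham1_1 p, pd5_ham1_2 p, pd5_ham1_3 p, pd5_ham1_4 p, pd5_ham3_0 p hp, pd5_ham3_1 p hp, pd5_ham3_2 p hp, pd5_ham3_3 p hp, pd5_ham3_4 p hp]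
  field_simp
  ring

lemma brk21 (p : EuclideanSpace ℝ (Fin 5)) (hp : p 4 ≠ 0) :
    redPB ham2 ham1 p = 0 := by
  rw [redPB, pd5_ham2_0 p, pd5_ham2_1 p, pd5_ham2_2 p, pd5_ham2_3 p, pd5_ham2_4 p, pd5_ham1_0 p, pd5_ham1_1 p, pd5_ham1_2 p, pd5_ham1_3 p, pd5_ham1_4 p]
  field_simp
  ring

lemma brk22 (p : EuclideanSpace ℝ (Fin 5)) (hp : p 4 ≠ 0) :
    redPB ham2 ham2 p = 0 := by
  rw [redPB, pd5_ham2_0 p, pd5_ham2_1 p, pd5_ham2_2 p, pd5_ham2_3 p, pd5_ham2_4 p]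
  field_simp
  ring

lemma brk23 (p : EuclideanSpace ℝ (Fin 5)) (hp : p 4 ≠ 0) :
    redPB ham2 ham3 p = 0 := by
  rw [redPB, pd5_ham2_0 p, pd5_ham2_1 p, pd5_ham2_2 p, pd5_ham2_3 p, pd5_ham2_4 p, pd5_ham3_0 p hp, pd5_ham3_1 p hp, pd5_ham3_2 p hp, pd5_ham3_3 p hp, pd5_ham3_4 p hp]
  field_simp
  ring

lemma brk31 (p : EuclideanSpace ℝ (Fin 5)) (hp : p 4 ≠ 0) :
    redPB ham3 ham1 p = 0 := by
  rw [redPB, pd5_ham3_0 p hp, pd5_ham3_1 p hp, pd5_ham3_2 p hp, pd5_ham3_3 p hp, pd5_ham3_4 p hp, pd5_ham1_0 p, pd5_ham1_1 p, pd5_ham1_2 p, pd5_ham1_3 p, pd5_ham1_4 p]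
  field_simp
  ring

lemma brk32 (p : EuclideanSpace ℝ (Fin 5)) (hp : p 4 ≠ 0) :
    redPB ham3 ham2 p = 0 := by
  rw [redPB, pd5_ham3_0 p hp, pd5_ham3_1 p hp, pd5_ham3_2 p hp, pd5_ham3_3 p hp, pd5_ham3_4 p hp, pd5_ham2_0 p, pd5_ham2_1 p, pd5_ham2_2 p, pd5_ham2_3 p, pd5_ham2_4 p]
  field_simp
  ring

lemma brk33 (p : EuclideanSpace ℝ (Fin 5)) (hp : p 4 ≠ 0) :
    redPB ham3 ham3 p = 0 := by
  rw [redPB, pd5_ham3_0 p hp, pd5_ham3_1 p hp, pd5_ham3_2 p hp, pd5_ham3_3 p hp, pd5_ham3_4 p hp]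
  field_simp
  ring

/-- On the open set `{𝔭₅ ≠ 0}` the three Arkhangel'skii Hamiltonians `𝔥₁, 𝔥₂, 𝔥₃` are
pairwise in involution with respect to the reduced Poisson bracket of the Borel subalgebra of
`sl(3,ℝ)`: `{𝔥ᵢ, 𝔥ⱼ}_red = 0` for all `i, j`. -/
theorem stmt_6 :
    ∀ i j : Fin 3, ∀ p : EuclideanSpace ℝ (Fin 5), p 4 ≠ 0 →
      redPB (arkHam i) (arkHam j) p = 0 := by
  intro i j p hp
  fin_cases i <;> fin_cases j <;>
    simp only [arkHam, Matrix.cons_val_zero, Matrix.cons_val_one, Matrix.head_cons,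
      Matrix.cons_val_two, Matrix.tail_cons] <;>
    first
      | exact brk11 p hp | exact brk12 p hp | exact brk13 p hp
      | exact brk21 p hp | exact brk22 p hp | exact brk23 p hp
      | exact brk31 p hp | exact brk32 p hp | exact brk33 p hp
end

section
/- For α, β, γ ∈ ℝ, the function (x, y) ↦ exp(−(1/2) e^{−2x} (α + γ + α e^{4x}(y² + 1) + 2β e^{2x} y)) is Lebesgue integrable on ℝ² if and only if α > 0 and α(α + γ) − β² > 0. Hence the Souriau space Ω of admissible generalized temperatures for the Poincaré plane is exactly the open cone in sl(2,ℝ) cut out by these two inequalities. -/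
/-!
For fixed `x` the exponent is a quadratic polynomial in `y` with leading coefficient
`-α e^{2x}/2`, so by Tonelli the slices are integrable exactly when `α > 0`. Integrating the
Gaussian in `y` leaves `√(2π/α) · exp (-x - (δ/α · e^{-2x} + α e^{2x}) / 2)` with
`δ = α(α+γ) - β²`. As `x → +∞` the term `α e^{2x}` makes this decay; as `x → -∞` it decays
if `δ > 0` and stays bounded below if `δ ≤ 0`.
-/

open MeasureTheory Real Set

theorem not_integrable_of_le_norm {α E : Type*} [MeasurableSpace α] {μ : Measure α}
    [NormedAddCommGroup E] {f : α → E} {s : Set α} (hs : μ s = ⊤) {C : ℝ} (hC : 0 < C)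
    (hle : ∀ x ∈ s, C ≤ ‖f x‖) : ¬Integrable f μ := fun hf =>
  (hf.measure_norm_ge_lt_top hC).ne (top_unique (hs ▸ measure_mono hle))

section Quadratic

variable {p : ℝ} (q r : ℝ)

theorem exp_quadratic_eq (hp : p ≠ 0) (y : ℝ) :
    exp (p * y ^ 2 + q * y + r) =
      exp (-(-p) * (y + q / (2 * p)) ^ 2) * exp (r - q ^ 2 / (4 * p)) := by
  rw [← exp_add]
  congr 1
  field_simp
  ring

theorem integrable_exp_quadratic (hp : p < 0) :
    Integrable (fun y : ℝ => exp (p * y ^ 2 + q * y + r)) := by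
  simp_rw [exp_quadratic_eq q r hp.ne]
  exact ((integrable_exp_neg_mul_sq (neg_pos.2 hp)).comp_add_right _).mul_const _

theorem integral_exp_quadratic (hp : p < 0) :
    ∫ y : ℝ, exp (p * y ^ 2 + q * y + r) = √(π / -p) * exp (r - q ^ 2 / (4 * p)) := by
  simp_rw [exp_quadratic_eq q r hp.ne]
  rw [integral_mul_const, integral_add_right_eq_self (fun y => exp (-(-p) * y ^ 2)),
    integral_gaussian]

-- On the half-line where `q * y ≥ 0` the integrand stays above `exp r`.
theorem not_integrable_exp_quadratic (hp : 0 ≤ p) :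
    ¬Integrable (fun y : ℝ => exp (p * y ^ 2 + q * y + r)) := by
  have hle : ∀ y, 0 ≤ q * y → exp r ≤ ‖exp (p * y ^ 2 + q * y + r)‖ := fun y hy => by
    rw [norm_of_nonneg (exp_pos _).le, exp_le_exp]
    nlinarith [mul_nonneg hp (sq_nonneg y)]
  rcases le_total 0 q with hq | hq
  · exact not_integrable_of_le_norm volume_Ici (exp_pos r)
      fun y hy => hle y (mul_nonneg hq hy)
  · exact not_integrable_of_le_norm volume_Iic (exp_pos r)
      fun y hy => hle y (mul_nonneg_of_nonpos_of_nonpos hq hy)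

theorem integrable_exp_quadratic_iff :
    Integrable (fun y : ℝ => exp (p * y ^ 2 + q * y + r)) ↔ p < 0 :=
  ⟨fun h => not_le.1 fun hp => not_integrable_exp_quadratic q r hp h,
    integrable_exp_quadratic q r⟩

end Quadratic

theorem sq_le_exp_two_mul_add_exp_neg_two_mul (x : ℝ) :
    x ^ 2 ≤ exp (2 * x) + exp (-2 * x) := by
  have h (t : ℝ) (ht : 0 ≤ t) : t ^ 2 ≤ exp (2 * t) := by
    rw [show 2 * t = t + t by ring, exp_add]
    nlinarith [add_one_le_exp t]
  rcases le_total 0 x with hx | hx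
  · nlinarith [h x hx, exp_pos (-2 * x)]
  · have := h (-x) (neg_nonneg.2 hx)
    rw [show 2 * -x = -2 * x by ring, neg_sq] at this
    linarith [exp_pos (2 * x)]

theorem integrable_exp_neg_sub_exp_iff {b : ℝ} (hb : 0 < b) (a : ℝ) :
    Integrable (fun x : ℝ => exp (-x - (a * exp (-2 * x) + b * exp (2 * x)) / 2)) ↔ 0 < a := by
  constructor
  · intro h
    by_contra! ha
    refine not_integrable_of_le_norm (volume_Iic (a := 0)) (exp_pos (-b / 2)) (fun x hx => ?_) h
    rw [norm_of_nonneg (exp_pos _).le, exp_le_exp]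
    have : exp (2 * x) ≤ 1 := exp_le_one_iff.2 (by linarith [mem_Iic.1 hx])
    nlinarith [mem_Iic.1 hx, exp_pos (-2 * x)]
  · intro ha
    have hm : 0 < min a b := lt_min ha hb
    refine (integrable_exp_quadratic (-1) 0 (neg_lt_zero.2 (half_pos hm))).mono'
      (by fun_prop) (Filter.Eventually.of_forall fun x => ?_)
    rw [norm_of_nonneg (exp_pos _).le, exp_le_exp]
    have := sq_le_exp_two_mul_add_exp_neg_two_mul x
    nlinarith [mul_le_mul_of_nonneg_right (min_le_left a b) (exp_pos (-2 * x)).le,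
      mul_le_mul_of_nonneg_right (min_le_right a b) (exp_pos (2 * x)).le]

noncomputable def souriauExponent (α β γ : ℝ) (p : ℝ × ℝ) : ℝ :=
  -(1/2) * exp (-2*p.1) * (α + γ + α * exp (4*p.1) * (p.2^2 + 1) + 2*β*exp (2*p.1)*p.2)

section Souriau

variable {α β γ : ℝ}

theorem souriauExponent_eq_quadratic (x y : ℝ) :
    souriauExponent α β γ (x, y) =
      -(α * exp (2 * x) / 2) * y ^ 2 + -β * y +
        (-(α + γ) * exp (-2 * x) - α * exp (2 * x)) / 2 := by
  have h4 : exp (-2 * x) * exp (4 * x) = exp (2 * x) := by rw [← exp_add]; ring_nf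
  have h2 : exp (-2 * x) * exp (2 * x) = 1 := by rw [← exp_add]; simp
  unfold souriauExponent
  linear_combination (-(α * (y ^ 2 + 1)) / 2) * h4 - β * y * h2

theorem integrable_souriau_slice_iff (x : ℝ) :
    Integrable (fun y => exp (souriauExponent α β γ (x, y))) ↔ 0 < α := by
  simp_rw [souriauExponent_eq_quadratic, integrable_exp_quadratic_iff]
  constructor <;> intro h <;> nlinarith [exp_pos (2 * x)]

-- Gaussian integration in `y` leaves the factor `√(2π / (α e^{2x})) = √(2π/α) e^{-x}`.
theorem integral_souriau_slice (hα : 0 < α) (x : ℝ) :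
    ∫ y, exp (souriauExponent α β γ (x, y)) =
      √(2 * π / α) *
        exp (-x - ((α * (α + γ) - β ^ 2) / α * exp (-2 * x) + α * exp (2 * x)) / 2) := by
  have hp : -(α * exp (2 * x) / 2) < 0 := by have := exp_pos (2 * x); nlinarith
  simp_rw [souriauExponent_eq_quadratic]
  rw [integral_exp_quadratic _ _ hp]
  have hsqrt : √(π / -(-(α * exp (2 * x) / 2))) = √(2 * π / α) * exp (-x) := by
    rw [← sqrt_sq (exp_pos (-x)).le, ← sqrt_mul (by positivity), ← exp_nat_mul]
    congr 1
    field_simp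
    rw [← exp_add]
    ring_nf
    exact exp_zero.symm
  rw [hsqrt, mul_assoc, ← exp_add]
  congr 2
  rw [show -2 * x = -(2 * x) by ring, exp_neg]
  field_simp
  ring

theorem integrable_souriau_iff :
    Integrable (fun p => exp (souriauExponent α β γ p)) ↔ 0 < α ∧ 0 < α * (α + γ) - β ^ 2 := by
  rw [Measure.volume_eq_prod, integrable_prod_iff
    (by unfold souriauExponent; exact Continuous.aestronglyMeasurable (by fun_prop))]
  simp only [norm_of_nonneg (exp_pos _).le, integrable_souriau_slice_iff, Filter.eventually_const]
  refine and_congr_right fun hα => ?_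
  simp only [integral_souriau_slice hα]
  rw [integrable_const_mul_iff (isUnit_iff_ne_zero.2 (sqrt_pos.2 (by positivity)).ne'),
    integrable_exp_neg_sub_exp_iff hα, div_pos_iff_of_pos_right hα]

end Souriau

/-- Characterization of the Souriau space `Ω` of admissible generalized temperatures for the
Poincaré plane: the Gibbs integrand is Lebesgue integrable on `ℝ²` if and only if `α > 0` and
`α(α+γ) − β² > 0`, i.e. `Ω` is exactly the open cone in `sl(2,ℝ)` cut out by these
inequalities. -/
theorem stmt_8 (α β γ : ℝ) :
    Integrable (fun p : ℝ × ℝ => Real.exp (-(1/2) * Real.exp (-2*p.1) *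
        (α + γ + α * Real.exp (4*p.1) * (p.2^2 + 1) + 2*β*Real.exp (2*p.1)*p.2))) volume
      ↔ (0 < α ∧ 0 < α * (α + γ) - β^2) :=
  integrable_souriau_iff
end

section
/- Let a, b, n, R be positive real constants and consider the van der Waals pressure function 𝒜_W(T, V) = nRT/(V − bn) − a n²/V² on the domain {T > 0, V > bn}. Then the system of equations ∂𝒜_W/∂V = 0 and ∂²𝒜_W/∂V² = 0 has exactly one solution in this domain, namely the critical point V_c = 3bn, T_c = 8a/(27bR), and at this point the pressure takes the critical value 𝒜_W(T_c, V_c) = a/(27b²). -/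
/-!
Both volume derivatives of the pressure are explicit rational functions of `V`. Clearing
denominators, the critical-point conditions read `nRT V³ = 2an²(V - bn)²` and
`nRT V⁴ = 3an²(V - bn)³`; multiplying the first by `V` and subtracting the second leaves
`an²(V - bn)²(V - 3bn) = 0`, so `V = 3bn`, and the first equation then determines `T`.
-/

open Topology

noncomputable def vdwPressure (n R a b T V : ℝ) : ℝ :=
  n * R * T / (V - b * n) - a * n ^ 2 / V ^ 2

noncomputable def vdwPressureDeriv (n R a b T V : ℝ) : ℝ :=
  -(n * R * T) / (V - b * n) ^ 2 + 2 * a * n ^ 2 / V ^ 3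

noncomputable def vdwPressureDeriv2 (n R a b T V : ℝ) : ℝ :=
  2 * (n * R * T) / (V - b * n) ^ 3 - 6 * a * n ^ 2 / V ^ 4

section

variable {n R a b T V : ℝ}

theorem hasDerivAt_vdwPressure (hV : V ≠ b * n) (hV₀ : V ≠ 0) :
    HasDerivAt (vdwPressure n R a b T) (vdwPressureDeriv n R a b T V) V := by
  have hs : V - b * n ≠ 0 := sub_ne_zero.2 hV
  have h := (hasDerivAt_const V (n * R * T)).div ((hasDerivAt_id' V).sub_const (b * n)) hs
  have h' := (hasDerivAt_const V (a * n ^ 2)).div (hasDerivAt_pow 2 V) (pow_ne_zero 2 hV₀)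
  refine (h.sub h').congr_deriv ?_
  simp only [vdwPressureDeriv]
  field_simp
  ring

theorem hasDerivAt_vdwPressureDeriv (hV : V ≠ b * n) (hV₀ : V ≠ 0) :
    HasDerivAt (vdwPressureDeriv n R a b T) (vdwPressureDeriv2 n R a b T V) V := by
  have hs : V - b * n ≠ 0 := sub_ne_zero.2 hV
  have h := (hasDerivAt_const V (-(n * R * T))).div (((hasDerivAt_id' V).sub_const (b * n)).pow 2)
    (pow_ne_zero 2 hs)
  have h' := (hasDerivAt_const V (2 * a * n ^ 2)).div (hasDerivAt_pow 3 V) (pow_ne_zero 3 hV₀)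
  refine (h.add h').congr_deriv ?_
  simp only [vdwPressureDeriv2, Pi.pow_apply]
  field_simp
  ring

theorem deriv_vdwPressure_eventuallyEq (hV : V ≠ b * n) (hV₀ : V ≠ 0) :
    deriv (vdwPressure n R a b T) =ᶠ[𝓝 V] vdwPressureDeriv n R a b T := by
  filter_upwards [isOpen_ne.mem_nhds hV, isOpen_ne.mem_nhds hV₀] with v hv hv₀
  exact (hasDerivAt_vdwPressure hv hv₀).deriv

theorem deriv_deriv_vdwPressure (hV : V ≠ b * n) (hV₀ : V ≠ 0) :
    deriv (deriv (vdwPressure n R a b T)) V = vdwPressureDeriv2 n R a b T V := by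
  rw [(deriv_vdwPressure_eventuallyEq hV hV₀).deriv_eq, (hasDerivAt_vdwPressureDeriv hV hV₀).deriv]

theorem vdwPressureDeriv_eq_zero_iff (hV : V ≠ b * n) (hV₀ : V ≠ 0) :
    vdwPressureDeriv n R a b T V = 0 ↔ n * R * T * V ^ 3 = 2 * a * n ^ 2 * (V - b * n) ^ 2 := by
  have hs : V - b * n ≠ 0 := sub_ne_zero.2 hV
  rw [vdwPressureDeriv, neg_div, neg_add_eq_sub, sub_eq_zero,
    div_eq_div_iff (pow_ne_zero 3 hV₀) (pow_ne_zero 2 hs)]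
  constructor <;> intro h <;> linarith

theorem vdwPressureDeriv2_eq_zero_iff (hV : V ≠ b * n) (hV₀ : V ≠ 0) :
    vdwPressureDeriv2 n R a b T V = 0 ↔ n * R * T * V ^ 4 = 3 * a * n ^ 2 * (V - b * n) ^ 3 := by
  have hs : V - b * n ≠ 0 := sub_ne_zero.2 hV
  rw [vdwPressureDeriv2, sub_eq_zero, div_eq_div_iff (pow_ne_zero 3 hs) (pow_ne_zero 4 hV₀)]
  constructor <;> intro h <;> linarith

theorem vdw_critical_equations_iff (ha : a ≠ 0) (hb : b ≠ 0) (hn : n ≠ 0) (hR : R ≠ 0)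
    (hV : V ≠ b * n) :
    (n * R * T * V ^ 3 = 2 * a * n ^ 2 * (V - b * n) ^ 2 ∧
        n * R * T * V ^ 4 = 3 * a * n ^ 2 * (V - b * n) ^ 3) ↔
      T = 8 * a / (27 * b * R) ∧ V = 3 * b * n := by
  have hs : V - b * n ≠ 0 := sub_ne_zero.2 hV
  constructor
  · rintro ⟨h₁, h₂⟩
    have hV₃ : V = 3 * b * n := by
      have h : a * n ^ 2 * (V - b * n) ^ 2 * (V - 3 * b * n) = 0 := by
        linear_combination V * h₁ - h₂
      exact sub_eq_zero.mp ((mul_eq_zero.mp h).resolve_left (by positivity))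
    refine ⟨?_, hV₃⟩
    rw [eq_div_iff (by positivity)]
    apply mul_left_cancel₀ (by positivity : b ^ 2 * n ^ 4 ≠ 0)
    subst hV₃
    linear_combination h₁
  · rintro ⟨rfl, rfl⟩
    constructor <;> · field_simp; ring

theorem vdwPressure_critical (hb : b ≠ 0) (hn : n ≠ 0) (hR : R ≠ 0) :
    vdwPressure n R a b (8 * a / (27 * b * R)) (3 * b * n) = a / (27 * b ^ 2) := by
  rw [vdwPressure, show 3 * b * n - b * n = 2 * b * n by ring]
  field_simp
  ring

end

/-- The van der Waals pressure `𝒜_W(T,V) = nRT/(V−bn) − an²/V²` has exactly one critical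
point in the physical domain `T > 0`, `V > bn`, where both `∂𝒜_W/∂V` and `∂²𝒜_W/∂V²`
vanish: it is `V_c = 3bn`, `T_c = 8a/(27bR)`, and there the pressure takes the critical value
`𝒜_W(T_c,V_c) = a/(27b²)`. -/
theorem stmt_16 (a b n R : ℝ) (ha : 0 < a) (hb : 0 < b) (hn : 0 < n) (hR : 0 < R)
    (A : ℝ → ℝ → ℝ)
    (hA : ∀ T V, A T V = n * R * T / (V - b * n) - a * n^2 / V^2) :
    (∀ T V : ℝ, 0 < T → b * n < V →
      ((deriv (fun v => A T v) V = 0 ∧ deriv (deriv (fun v => A T v)) V = 0)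
        ↔ (T = 8 * a / (27 * b * R) ∧ V = 3 * b * n))) ∧
    A (8 * a / (27 * b * R)) (3 * b * n) = a / (27 * b^2) := by
  obtain rfl : A = vdwPressure n R a b := funext₂ hA
  refine ⟨fun T V _ hV ↦ ?_, vdwPressure_critical hb.ne' hn.ne' hR.ne'⟩
  have hV₀ : V ≠ 0 := (mul_pos hb hn |>.trans hV).ne'
  rw [(hasDerivAt_vdwPressure hV.ne' hV₀).deriv, deriv_deriv_vdwPressure hV.ne' hV₀,
    vdwPressureDeriv_eq_zero_iff hV.ne' hV₀, vdwPressureDeriv2_eq_zero_iff hV.ne' hV₀]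
  exact vdw_critical_equations_iff ha.ne' hb.ne' hn.ne' hR.ne' hV.ne'
end
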